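/- Let G be a Hausdorff ample groupoid whose unit space G⁰ is finite, let R be a commutative ring with identity, let O₁,…,O_k be the orbits of G⁰, choose xᵢ∈Oᵢ, let Gᵢ be the isotropy group {γ : d(γ)=r(γ)=xᵢ} and nᵢ=|Oᵢ|. Then there is an R-algebra isomorphism A_R(G) ≅ ⨁_{i=1}^{k} M_{nᵢ}(R[Gᵢ]), where R[Gᵢ] is the group ring of Gᵢ over R and M_n denotes n×n matrices. -/

import Mathlib

open Set Function

/-- A groupoid structure on a type `G`: a small category in which every morphism is
invertible, encoded with a total multiplication `mul` that is only meaningful on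
composable pairs.  Here `d x = x⁻¹x` and `r x = xx⁻¹`, and a pair `(x, y)` is
composable exactly when `d x = r y`. -/
structure GroupoidStr (G : Type*) where
  mul : G → G → G
  inv : G → G
  inv_inv : ∀ x, inv (inv x) = x
  /-- `x · d x = x` -/
  mul_d : ∀ x, mul x (mul (inv x) x) = x
  /-- `r x · x = x` -/
  r_mul : ∀ x, mul (mul x (inv x)) x = x
  /-- associativity on composable pairs -/
  assoc : ∀ x y z, mul (inv x) x = mul y (inv y) → mul (inv y) y = mul z (inv z) →
    mul (mul x y) z = mul x (mul y z)
  /-- `d (xy) = d y` for composable `x, y` -/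
  d_comp : ∀ x y, mul (inv x) x = mul y (inv y) →
    mul (inv (mul x y)) (mul x y) = mul (inv y) y
  /-- `r (xy) = r x` for composable `x, y` -/
  r_comp : ∀ x y, mul (inv x) x = mul y (inv y) →
    mul (mul x y) (inv (mul x y)) = mul x (inv x)
  /-- `(xy)⁻¹ = y⁻¹x⁻¹` for composable `x, y` -/
  inv_mul : ∀ x y, mul (inv x) x = mul y (inv y) → inv (mul x y) = mul (inv y) (inv x)
  /-- units are their own inverses -/
  unit_self_inv : ∀ x, inv (mul (inv x) x) = mul (inv x) x
  /-- units are idempotents -/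
  unit_idem : ∀ x, mul (mul (inv x) x) (mul (inv x) x) = mul (inv x) x

namespace GroupoidStr

variable {G : Type*} (S : GroupoidStr G)

/-- The domain (source) `d x = x⁻¹ x` of `x`. -/
def d (x : G) : G := S.mul (S.inv x) x

/-- The range `r x = x x⁻¹` of `x`. -/
def r (x : G) : G := S.mul x (S.inv x)

/-- The unit space `G⁰ = d(G) = r(G)`. -/
def unitSpace : Set G := Set.range S.d

/-- The isotropy bundle `Iso(G) = {x | d x = r x}`. -/
def IsoSet : Set G := {x | S.d x = S.r x}

/-- The orbit of a unit `u`: `{r γ : d γ = u}`. -/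
def orbit (u : G) : Set G := S.r '' {γ : G | S.d γ = u}

/-- A subset `U` of the unit space is invariant if `d γ ∈ U` implies `r γ ∈ U`. -/
def IsInvariant (U : Set G) : Prop := ∀ γ : G, S.d γ ∈ U → S.r γ ∈ U

section Top

variable [TopologicalSpace G]

/-- `G` is a topological groupoid: inversion and composition (on the set of composable
pairs, with the relative product topology) are continuous. -/
def IsTopological : Prop :=
  Continuous S.inv ∧
    Continuous fun p : {p : G × G // S.d p.1 = S.r p.2} => S.mul p.1.1 p.1.2

/-- An open bisection: an open set on which both `d` and `r` restrict to homeomorphisms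
onto open subsets of the unit space. -/
def IsOpenBisection (U : Set G) : Prop :=
  IsOpen U ∧ Set.InjOn S.d U ∧ Set.InjOn S.r U ∧
    (∀ V ⊆ U, IsOpen V → IsOpen (S.d '' V)) ∧ (∀ V ⊆ U, IsOpen V → IsOpen (S.r '' V))

/-- An étale groupoid: there is a basis of open bisections (equivalently, `d` is a local
homeomorphism). -/
def IsEtale : Prop := ∀ x : G, ∃ U, x ∈ U ∧ S.IsOpenBisection U

/-- An ample groupoid: there is a basis of compact open bisections. -/
def IsAmple : Prop :=
  ∀ (x : G) (W : Set G), x ∈ W → IsOpen W →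
    ∃ U, x ∈ U ∧ U ⊆ W ∧ IsCompact U ∧ S.IsOpenBisection U

def IsCompactOpenBisection (U : Set G) : Prop := IsCompact U ∧ S.IsOpenBisection U

/-- `G` is effective if the interior of the isotropy bundle is the unit space. -/
def IsEffective : Prop := interior S.IsoSet = S.unitSpace

variable (R : Type*) [CommRing R]

/-- The underlying set of the Steinberg algebra `A_R(G)`: locally constant,
compactly supported `R`-valued functions on `G`.  (The groupoid structure argument is
only used for the `A_R(G)` notation `S.SteinSet R`.) -/
def SteinSet (_Sg : GroupoidStr G) : Set (G → R) :=
  {f | IsLocallyConstant f ∧ HasCompactSupport f}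

variable {R}

/-- Convolution: `(f * g) γ = ∑_{αβ = γ} f α * g β`. -/
noncomputable def conv (f g : G → R) : G → R := fun γ =>
  ∑ᶠ p ∈ {p : G × G | S.d p.1 = S.r p.2 ∧ S.mul p.1 p.2 = γ}, f p.1 * g p.2

end Top

end GroupoidStr

namespace GroupoidStr

variable {G : Type*} (S : GroupoidStr G)

/-- The isotropy group at a unit `u`: `{γ : d γ = r γ = u}`, with the groupoid
operations. -/
def isoGroup (u : G) (hu : S.d u = u ∧ S.r u = u) :
    Group {γ : G // S.d γ = u ∧ S.r γ = u} where
  mul a b := ⟨S.mul a.1 b.1,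
    (S.d_comp a.1 b.1 (a.2.1.trans b.2.2.symm)).trans b.2.1,
    (S.r_comp a.1 b.1 (a.2.1.trans b.2.2.symm)).trans a.2.2⟩
  one := ⟨u, hu⟩
  inv a := ⟨S.inv a.1, by
    refine ⟨?_, ?_⟩
    · show S.mul (S.inv (S.inv a.1)) (S.inv a.1) = u
      rw [S.inv_inv]; exact a.2.2
    · show S.mul (S.inv a.1) (S.inv (S.inv a.1)) = u
      rw [S.inv_inv]; exact a.2.1⟩
  mul_assoc a b c :=
    Subtype.ext (S.assoc a.1 b.1 c.1 (a.2.1.trans b.2.2.symm) (b.2.1.trans c.2.2.symm))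
  one_mul a := Subtype.ext (by
    obtain ⟨av, h1, h2⟩ := a
    show S.mul u av = av
    rw [← h2]
    exact S.r_mul av)
  mul_one a := Subtype.ext (by
    obtain ⟨av, h1, h2⟩ := a
    show S.mul av u = av
    rw [← h1]
    exact S.mul_d av)
  inv_mul_cancel a := Subtype.ext a.2.1

end GroupoidStr
namespace GroupoidStr

variable {G : Type*} (S : GroupoidStr G)

lemma d_inv' (x : G) : S.d (S.inv x) = S.r x := by
  show S.mul (S.inv (S.inv x)) (S.inv x) = S.mul x (S.inv x)
  rw [S.inv_inv]

lemma r_inv' (x : G) : S.r (S.inv x) = S.d x := by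
  show S.mul (S.inv x) (S.inv (S.inv x)) = S.mul (S.inv x) x
  rw [S.inv_inv]

lemma mul_d'' (x : G) : S.mul x (S.d x) = x := S.mul_d x

lemma r_mul'' (x : G) : S.mul (S.r x) x = x := S.r_mul x

lemma d_mul' {x y : G} (h : S.d x = S.r y) : S.d (S.mul x y) = S.d y := S.d_comp x y h

lemma r_mul_eq' {x y : G} (h : S.d x = S.r y) : S.r (S.mul x y) = S.r x := S.r_comp x y h

lemma assoc'' {x y z : G} (h1 : S.d x = S.r y) (h2 : S.d y = S.r z) :
    S.mul (S.mul x y) z = S.mul x (S.mul y z) := S.assoc x y z h1 h2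

lemma d_d' (x : G) : S.d (S.d x) = S.d x := by
  show S.mul (S.inv (S.mul (S.inv x) x)) (S.mul (S.inv x) x) = S.mul (S.inv x) x
  rw [S.unit_self_inv x]
  exact S.unit_idem x

lemma r_d' (x : G) : S.r (S.d x) = S.d x := by
  show S.mul (S.mul (S.inv x) x) (S.inv (S.mul (S.inv x) x)) = S.mul (S.inv x) x
  rw [S.unit_self_inv x]
  exact S.unit_idem x

lemma d_r' (x : G) : S.d (S.r x) = S.r x := by
  rw [← S.d_inv' x, S.d_d']

lemma r_r' (x : G) : S.r (S.r x) = S.r x := by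
  rw [← S.d_inv' x, S.r_d']

lemma inv_cancel_left' {x y : G} (h : S.d x = S.r y) :
    S.mul (S.inv x) (S.mul x y) = y := by
  rw [← S.assoc'' (S.d_inv' x) h]
  show S.mul (S.d x) y = y
  rw [h]
  exact S.r_mul'' y

lemma mul_inv_cancel_left' {x y : G} (h : S.r x = S.r y) :
    S.mul x (S.mul (S.inv x) y) = y := by
  rw [← S.assoc'' (S.r_inv' x).symm ((S.d_inv' x).trans h)]
  show S.mul (S.r x) y = y
  rw [h]
  exact S.r_mul'' y

lemma mul_inv_cancel_right' {x y : G} (h : S.d x = S.d y) :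
    S.mul (S.mul y (S.inv x)) x = y := by
  rw [S.assoc'' (h.symm.trans (S.r_inv' x).symm) (S.d_inv' x)]
  show S.mul y (S.d x) = y
  rw [h]
  exact S.mul_d'' y

lemma inv_cancel_right' {x t : G} (h : S.d x = S.r t) :
    S.mul (S.mul x t) (S.inv t) = x := by
  rw [S.assoc'' h (S.r_inv' t).symm]
  show S.mul x (S.r t) = x
  rw [← h]
  exact S.mul_d'' x

/-- The "triple product" `p h q⁻¹` used to decompose a groupoid over an orbit. -/
def trip (p q h : G) : G := S.mul (S.mul p h) (S.inv q)

section Trip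

variable {S}
variable {w p q s h h₁ h₂ : G}

lemma d_trip (hp : S.d p = w) (hq : S.d q = w) (hh1 : S.d h = w) (hh2 : S.r h = w) :
    S.d (S.trip p q h) = S.r q := by
  have c1 : S.d p = S.r h := by rw [hp, hh2]
  have c2 : S.d (S.mul p h) = S.r (S.inv q) := by rw [S.d_mul' c1, S.r_inv', hq, hh1]
  rw [trip, S.d_mul' c2, S.d_inv']

lemma r_trip (hp : S.d p = w) (hq : S.d q = w) (hh1 : S.d h = w) (hh2 : S.r h = w) :
    S.r (S.trip p q h) = S.r p := by
  have c1 : S.d p = S.r h := by rw [hp, hh2]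
  have c2 : S.d (S.mul p h) = S.r (S.inv q) := by rw [S.d_mul' c1, S.r_inv', hq, hh1]
  rw [trip, S.r_mul_eq' c2, S.r_mul_eq' c1]

lemma trip_mul (hp : S.d p = w) (hq : S.d q = w) (hs : S.d s = w)
    (h11 : S.d h₁ = w) (h12 : S.r h₁ = w) (h21 : S.d h₂ = w) (h22 : S.r h₂ = w) :
    S.mul (S.trip p q h₁) (S.trip q s h₂) = S.trip p s (S.mul h₁ h₂) := by
  have cA : S.d p = S.r h₁ := by rw [hp, h12]
  have cB : S.d h₂ = S.r (S.inv s) := by rw [h21, S.r_inv', hs]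
  have cqB : S.d q = S.r (S.mul h₂ (S.inv s)) := by rw [hq, S.r_mul_eq' cB, h22]
  -- rewrite the second factor as q * (h₂ * s⁻¹)
  have e2 : S.trip q s h₂ = S.mul q (S.mul h₂ (S.inv s)) := by
    rw [trip, S.assoc'' (by rw [hq, h22]) cB]
  rw [e2, trip]
  -- associate: ((p h₁) q⁻¹) (q B) = (p h₁) (q⁻¹ (q B))
  have cA' : S.d (S.mul p h₁) = S.r (S.inv q) := by rw [S.d_mul' cA, h11, S.r_inv', hq]
  have crqB : S.d (S.inv q) = S.r (S.mul q (S.mul h₂ (S.inv s))) := by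
    rw [S.d_inv', S.r_mul_eq' cqB]
  rw [S.assoc'' cA' crqB, S.inv_cancel_left' cqB]
  -- now (p h₁) (h₂ s⁻¹) = (p (h₁ h₂)) s⁻¹
  have c3 : S.d (S.mul p h₁) = S.r h₂ := by rw [S.d_mul' cA, h11, h22]
  have c4 : S.d h₁ = S.r h₂ := by rw [h11, h22]
  rw [← S.assoc'' c3 cB, S.assoc'' cA c4, trip]

lemma trip_recover (hp : S.d p = w) (hq : S.d q = w) (hh1 : S.d h = w) (hh2 : S.r h = w) :
    S.mul (S.mul (S.inv p) (S.trip p q h)) q = h := by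
  have cA : S.d p = S.r h := by rw [hp, hh2]
  have cA' : S.d (S.mul p h) = S.r (S.inv q) := by rw [S.d_mul' cA, hh1, S.r_inv', hq]
  have crA : S.d (S.inv p) = S.r (S.mul p h) := by rw [S.d_inv', S.r_mul_eq' cA]
  rw [trip, ← S.assoc'' crA cA', S.inv_cancel_left' cA]
  exact S.mul_inv_cancel_right' (hq.trans hh1.symm)

variable {γ : G}

lemma elem_d (hp : S.d p = w) (hq : S.d q = w) (hrp : S.r p = S.r γ) (hrq : S.r q = S.d γ) :
    S.d (S.mul (S.mul (S.inv p) γ) q) = w := by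
  have c0 : S.d (S.inv p) = S.r γ := by rw [S.d_inv', hrp]
  have c1 : S.d (S.mul (S.inv p) γ) = S.r q := by rw [S.d_mul' c0, hrq]
  rw [S.d_mul' c1]
  exact hq

lemma elem_r (hp : S.d p = w) (hq : S.d q = w) (hrp : S.r p = S.r γ) (hrq : S.r q = S.d γ) :
    S.r (S.mul (S.mul (S.inv p) γ) q) = w := by
  have c0 : S.d (S.inv p) = S.r γ := by rw [S.d_inv', hrp]
  have c1 : S.d (S.mul (S.inv p) γ) = S.r q := by rw [S.d_mul' c0, hrq]
  rw [S.r_mul_eq' c1, S.r_mul_eq' c0, S.r_inv', hp]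

lemma trip_of_elem (hp : S.d p = w) (hq : S.d q = w) (hrp : S.r p = S.r γ) (hrq : S.r q = S.d γ) :
    S.trip p q (S.mul (S.mul (S.inv p) γ) q) = γ := by
  have c0 : S.d (S.inv p) = S.r γ := by rw [S.d_inv', hrp]
  have c1 : S.d (S.mul (S.inv p) γ) = S.r q := by rw [S.d_mul' c0, hrq]
  have h1 : S.d p = S.r (S.mul (S.inv p) γ) := by rw [S.r_mul_eq' c0, S.r_inv']
  rw [trip, ← S.assoc'' h1 c1, S.mul_inv_cancel_left' hrp]
  exact S.inv_cancel_right' hrq.symm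

end Trip

end GroupoidStr

/-- Let `G` be a Hausdorff ample groupoid with finite unit space, `R` a
commutative unital ring, `O 1, …, O k` the orbits of `G⁰`, `x i ∈ O i`, `G i` the
isotropy group at `x i` and `n i = |O i|`.  Then
`A_R(G) ≅ ⨁_{i=1}^k M_{n i}(R[G i])` as `R`-algebras. -/
theorem steinberg_of_finite_unitSpace {G : Type*} [TopologicalSpace G]
    (S : GroupoidStr G) (R : Type*) [CommRing R] [T2Space G]
    (hTop : S.IsTopological) (hAmple : S.IsAmple) (hFin : S.unitSpace.Finite)
    (k : ℕ) (O : Fin k → Set G) (x : Fin k → G) (n : Fin k → ℕ)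
    (hx : ∀ i, S.d (x i) = x i ∧ S.r (x i) = x i)
    (hxO : ∀ i, x i ∈ O i)
    (hO : ∀ i, O i = S.orbit (x i))
    (hpart : ∀ u ∈ S.unitSpace, ∃! i, u ∈ O i)
    (hn : ∀ i, (O i).ncard = n i) :
    letI : ∀ i, Group {γ : G // S.d γ = x i ∧ S.r γ = x i} :=
      fun i => S.isoGroup (x i) (hx i)
    ∃ φ : (G → R) →
        (∀ i, Matrix (Fin (n i)) (Fin (n i))
          (MonoidAlgebra R {γ : G // S.d γ = x i ∧ S.r γ = x i})),
      Set.BijOn φ (S.SteinSet R) Set.univ ∧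
      (∀ f ∈ S.SteinSet R, ∀ g ∈ S.SteinSet R, φ (f + g) = φ f + φ g) ∧
      (∀ f ∈ S.SteinSet R, ∀ g ∈ S.SteinSet R, φ (S.conv f g) = φ f * φ g) ∧
      (∀ (c : R), ∀ f ∈ S.SteinSet R, φ (c • f) = c • φ f) := by
  classical
  letI instGi : ∀ i, Group {γ : G // S.d γ = x i ∧ S.r γ = x i} :=
    fun i => S.isoGroup (x i) (hx i)
  -- ## Stage A: `G` is discrete and Steinberg functions are the finitely supported ones
  have hdc : Continuous S.d := by
    have h1 : Continuous fun γ : G =>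
        (⟨(S.inv γ, γ), S.d_inv' γ⟩ : {p : G × G // S.d p.1 = S.r p.2}) :=
      (hTop.1.prodMk continuous_id).subtype_mk _
    exact hTop.2.comp h1
  haveI hdisc : DiscreteTopology G := by
    rw [discreteTopology_iff_isOpen_singleton]
    intro γ
    obtain ⟨U, hγU, -, -, hUopen, hdinj, -, hdmap, -⟩ :=
      hAmple γ Set.univ (Set.mem_univ γ) isOpen_univ
    have hdU : IsOpen (S.d '' U) := hdmap U subset_rfl hUopen
    have hdUfin : (S.d '' U).Finite :=
      hFin.subset (by rintro u ⟨δ, -, rfl⟩; exact ⟨δ, rfl⟩)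
    have hmem : S.d γ ∈ S.d '' U := ⟨γ, hγU, rfl⟩
    have hsing : IsOpen ({S.d γ} : Set G) := by
      have heq : ({S.d γ} : Set G) = (S.d '' U) \ ((S.d '' U) \ {S.d γ}) := by
        rw [Set.diff_diff_right_self, Set.inter_eq_self_of_subset_right
          (Set.singleton_subset_iff.mpr hmem)]
      rw [heq]
      exact hdU.sdiff ((hdUfin.subset Set.diff_subset).isClosed)
    have hVeq : U ∩ S.d ⁻¹' {S.d γ} = {γ} := by
      apply Set.eq_singleton_iff_unique_mem.mpr
      refine ⟨⟨hγU, rfl⟩, ?_⟩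
      rintro v ⟨hvU, hv⟩
      exact hdinj hvU hγU hv
    rw [← hVeq]
    exact hUopen.inter (hsing.preimage hdc)
  have hstein : ∀ f : G → R, f ∈ S.SteinSet R ↔ (Function.support f).Finite := by
    intro f
    constructor
    · rintro ⟨-, hc⟩
      exact ((hc : IsCompact (tsupport f)).finite_of_discrete).subset (subset_tsupport f)
    · intro hfin
      refine ⟨fun s => isOpen_discrete _, ?_⟩
      unfold HasCompactSupport tsupport
      rw [(isClosed_discrete _).closure_eq]
      exact hfin.isCompact
  -- ## Stage B: combinatorial structure of the groupoid
  have hO_sub : ∀ i, O i ⊆ S.unitSpace := by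
    intro i u hu
    rw [hO i] at hu
    obtain ⟨δ, -, rfl⟩ := hu
    exact ⟨S.inv δ, S.d_inv' δ⟩
  have hOfin : ∀ i, (O i).Finite := fun i => hFin.subset (hO_sub i)
  have hcard : ∀ i, (hOfin i).toFinset.card = n i := fun i => by
    rw [← Set.ncard_eq_toFinset_card (O i) (hOfin i)]; exact hn i
  have e : (i : Fin k) → Fin (n i) ≃ {u // u ∈ (hOfin i).toFinset} :=
    fun i => (Finset.equivFinOfCardEq (hcard i)).symm
  have hu_mem : ∀ i a, ((e i a : G)) ∈ O i :=
    fun i a => (hOfin i).mem_toFinset.mp (e i a).2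
  have hT0 : ∀ (i : Fin k) (u : G), ∃ t : G, u ∈ O i → S.d t = x i ∧ S.r t = u := by
    intro i u
    by_cases h : u ∈ O i
    · have h' := h
      rw [hO i] at h'
      obtain ⟨δ, hδ, hrδ⟩ := h'
      exact ⟨δ, fun _ => ⟨hδ, hrδ⟩⟩
    · exact ⟨u, fun hu => absurd hu h⟩
  choose T hT using hT0
  have hTd : ∀ i u, u ∈ O i → S.d (T i u) = x i := fun i u hu => (hT i u hu).1
  have hTr : ∀ i u, u ∈ O i → S.r (T i u) = u := fun i u hu => (hT i u hu).2
  have horbit : ∀ i (γ : G), S.d γ ∈ O i → S.r γ ∈ O i := by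
    intro i γ hd
    rw [hO i] at hd ⊢
    obtain ⟨δ, hδ, hrδ⟩ := hd
    refine ⟨S.mul γ δ, ?_, ?_⟩
    · show S.d (S.mul γ δ) = x i
      rw [S.d_mul' hrδ.symm]
      exact hδ
    · exact S.r_mul_eq' hrδ.symm
  have hOdisj : ∀ i j u, u ∈ O i → u ∈ O j → i = j := fun i j u hi hj =>
    (hpart u (hO_sub i hi)).unique hi hj
  have hidx0 : ∀ γ : G, ∃ i, S.d γ ∈ O i ∧ S.r γ ∈ O i := by
    intro γ
    obtain ⟨i, hi, -⟩ := hpart (S.d γ) ⟨γ, rfl⟩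
    exact ⟨i, hi, horbit i γ hi⟩
  choose idx hidxd hidxr using hidx0
  -- the decoding function
  obtain ⟨DEC, hDECapp⟩ :
      ∃ D : (i : Fin k) → Fin (n i) → Fin (n i) →
        {γ : G // S.d γ = x i ∧ S.r γ = x i} → G,
      ∀ i a b gg, D i a b gg = S.trip (T i ((e i a : G))) (T i ((e i b : G))) gg.1 :=
    ⟨_, fun _ _ _ _ => rfl⟩
  have hdec_d : ∀ i a b gg, S.d (DEC i a b gg) = ((e i b : G)) := by
    intro i a b gg
    rw [hDECapp,
      GroupoidStr.d_trip (hTd i _ (hu_mem i a)) (hTd i _ (hu_mem i b)) gg.2.1 gg.2.2,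
      hTr i _ (hu_mem i b)]
  have hdec_r : ∀ i a b gg, S.r (DEC i a b gg) = ((e i a : G)) := by
    intro i a b gg
    rw [hDECapp,
      GroupoidStr.r_trip (hTd i _ (hu_mem i a)) (hTd i _ (hu_mem i b)) gg.2.1 gg.2.2,
      hTr i _ (hu_mem i a)]
  have hm : ∀ i (a b c : Fin (n i)) gg gg',
      S.mul (DEC i a c gg) (DEC i c b gg') = DEC i a b (gg * gg') := by
    intro i a b c gg gg'
    rw [hDECapp, hDECapp, hDECapp,
      GroupoidStr.trip_mul (hTd i _ (hu_mem i a)) (hTd i _ (hu_mem i c))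
        (hTd i _ (hu_mem i b)) gg.2.1 gg.2.2 gg'.2.1 gg'.2.2]
    rfl
  have hinj : ∀ i (A B a b : Fin (n i)) Gg gg,
      DEC i A B Gg = DEC i a b gg → A = a ∧ B = b ∧ Gg = gg := by
    intro i A B a b Gg gg hEq
    have hb : B = b := by
      have h1 : ((e i B : G)) = ((e i b : G)) := by
        rw [← hdec_d i A B Gg, hEq, hdec_d]
      exact (e i).injective (Subtype.ext h1)
    have ha : A = a := by
      have h1 : ((e i A : G)) = ((e i a : G)) := by
        rw [← hdec_r i A B Gg, hEq, hdec_r]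
      exact (e i).injective (Subtype.ext h1)
    subst ha; subst hb
    refine ⟨rfl, rfl, ?_⟩
    apply Subtype.ext
    have h1 := GroupoidStr.trip_recover (hTd i _ (hu_mem i A)) (hTd i _ (hu_mem i B))
      Gg.2.1 Gg.2.2
    have h2 := GroupoidStr.trip_recover (hTd i _ (hu_mem i A)) (hTd i _ (hu_mem i B))
      gg.2.1 gg.2.2
    have hEq' := hEq
    rw [hDECapp, hDECapp] at hEq'
    rw [← h1, ← h2, hEq']
  have key : ∀ (j i : Fin k) (A B : Fin (n j)) (Gg : {γ : G // S.d γ = x j ∧ S.r γ = x j})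
      (a b : Fin (n i)) (gg : {γ : G // S.d γ = x i ∧ S.r γ = x i}),
      DEC j A B Gg = DEC i a b gg →
      (⟨j, A, B, Gg⟩ : Σ i : Fin k, Fin (n i) × Fin (n i) ×
        {γ : G // S.d γ = x i ∧ S.r γ = x i}) = ⟨i, a, b, gg⟩ := by
    intro j i A B Gg a b gg hEq
    have hji : j = i := by
      apply hOdisj j i ((e j B : G)) (hu_mem j B)
      rw [← hdec_d j A B Gg, hEq, hdec_d]
      exact hu_mem i b
    subst hji
    obtain ⟨ha, hb, hg⟩ := hinj j A B a b Gg gg hEq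
    rw [ha, hb, hg]
  have hdecinj : ∀ i a b, Function.Injective (DEC i a b) := by
    intro i a b gg gg' hgg
    exact (hinj i a b a b gg gg' hgg).2.2
  -- the encoding function
  obtain ⟨ENC, hENCeq⟩ :
      ∃ E : G → (Σ i : Fin k, Fin (n i) × Fin (n i) ×
          {γ : G // S.d γ = x i ∧ S.r γ = x i}),
        ∀ γ, E γ = ⟨idx γ,
          (e (idx γ)).symm ⟨S.r γ, (hOfin (idx γ)).mem_toFinset.mpr (hidxr γ)⟩,
          (e (idx γ)).symm ⟨S.d γ, (hOfin (idx γ)).mem_toFinset.mpr (hidxd γ)⟩,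
          ⟨S.mul (S.mul (S.inv (T (idx γ) (S.r γ))) γ) (T (idx γ) (S.d γ)),
            S.elem_d (hTd _ _ (hidxr γ)) (hTd _ _ (hidxd γ))
              (hTr _ _ (hidxr γ)) (hTr _ _ (hidxd γ)),
            S.elem_r (hTd _ _ (hidxr γ)) (hTd _ _ (hidxd γ))
              (hTr _ _ (hidxr γ)) (hTr _ _ (hidxd γ))⟩⟩ :=
    ⟨_, fun _ => rfl⟩
  have hde : ∀ γ : G, DEC (ENC γ).1 (ENC γ).2.1 (ENC γ).2.2.1 (ENC γ).2.2.2 = γ := by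
    intro γ
    rw [hENCeq]
    dsimp only
    rw [hDECapp]
    simp only [Equiv.apply_symm_apply]
    exact S.trip_of_elem (hTd _ _ (hidxr γ)) (hTd _ _ (hidxd γ))
      (hTr _ _ (hidxr γ)) (hTr _ _ (hidxd γ))
  have hed : ∀ i a b gg, ENC (DEC i a b gg) = ⟨i, a, b, gg⟩ := by
    intro i a b gg
    exact key (ENC (DEC i a b gg)).1 i (ENC (DEC i a b gg)).2.1
      (ENC (DEC i a b gg)).2.2.1 (ENC (DEC i a b gg)).2.2.2 a b gg (hde (DEC i a b gg))
  -- the bijection between composable pairs with fixed product and `Fin (n i) × Gᵢ`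
  have hbij : ∀ i (a b : Fin (n i)) (u : {γ : G // S.d γ = x i ∧ S.r γ = x i}),
      Set.BijOn (fun q : Fin (n i) × {γ : G // S.d γ = x i ∧ S.r γ = x i} =>
          (DEC i a q.1 q.2, DEC i q.1 b (q.2⁻¹ * u)))
        Set.univ
        {p : G × G | S.d p.1 = S.r p.2 ∧ S.mul p.1 p.2 = DEC i a b u} := by
    intro i a b u
    refine ⟨?_, ?_, ?_⟩
    · intro q _
      refine ⟨?_, ?_⟩
      · show S.d (DEC i a q.1 q.2) = S.r (DEC i q.1 b (q.2⁻¹ * u))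
        rw [hdec_d, hdec_r]
      · show S.mul (DEC i a q.1 q.2) (DEC i q.1 b (q.2⁻¹ * u)) = DEC i a b u
        rw [hm, mul_inv_cancel_left]
    · intro q _ q' _ hqq
      have h1 : DEC i a q.1 q.2 = DEC i a q'.1 q'.2 := congrArg Prod.fst hqq
      obtain ⟨-, hc, hg⟩ := hinj i a q.1 a q'.1 q.2 q'.2 h1
      exact Prod.ext hc hg
    · rintro p ⟨hcomp, hprod⟩
      rcases hz1 : ENC p.1 with ⟨i₁, a₁, c₁, g₁⟩
      rcases hz2 : ENC p.2 with ⟨i₂, a₂, b₂, g₂⟩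
      have hp1 : DEC i₁ a₁ c₁ g₁ = p.1 := by
        have h0 := hde p.1; rw [hz1] at h0; exact h0
      have hp2 : DEC i₂ a₂ b₂ g₂ = p.2 := by
        have h0 := hde p.2; rw [hz2] at h0; exact h0
      have hu : ((e i₁ c₁ : G)) = ((e i₂ a₂ : G)) := by
        rw [← hdec_d i₁ a₁ c₁ g₁, ← hdec_r i₂ a₂ b₂ g₂, hp1, hp2]
        exact hcomp
      have hii : i₁ = i₂ := by
        apply hOdisj i₁ i₂ ((e i₁ c₁ : G)) (hu_mem i₁ c₁)
        rw [hu]; exact hu_mem i₂ a₂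
      subst hii
      have hc : c₁ = a₂ := (e i₁).injective (Subtype.ext hu)
      subst hc
      have hprod' : DEC i₁ a₁ b₂ (g₁ * g₂) = DEC i a b u := by
        rw [← hm, hp1, hp2]; exact hprod
      have hkey := key i₁ i a₁ b₂ (g₁ * g₂) a b u hprod'
      have hi : i₁ = i := congrArg Sigma.fst hkey
      subst hi
      have hkey2 : (a₁, b₂, g₁ * g₂) = (a, b, u) := sigma_mk_injective (β := fun i : Fin k => Fin (n i) × Fin (n i) × {γ : G // S.d γ = x i ∧ S.r γ = x i}) hkey
      simp only [Prod.mk.injEq] at hkey2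
      obtain ⟨ha1, hb2, hgh⟩ := hkey2
      subst ha1; subst hb2; subst hgh
      refine ⟨(c₁, g₁), Set.mem_univ _, ?_⟩
      show (DEC i₁ a₁ c₁ g₁, DEC i₁ c₁ b₂ (g₁⁻¹ * (g₁ * g₂))) = p
      rw [inv_mul_cancel_left, hp1, hp2]
  -- ## Stage C: the algebra isomorphism
  obtain ⟨φ, hφ⟩ :
      ∃ φ : (G → R) → (∀ i, Matrix (Fin (n i)) (Fin (n i))
          (MonoidAlgebra R {γ : G // S.d γ = x i ∧ S.r γ = x i})),
        ∀ f : G → R, (Function.support f).Finite →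
          ∀ i a b gg, (φ f i a b).coeff gg = f (DEC i a b gg) := by
    refine ⟨fun f i a b =>
      if hfin : (Function.support fun gg => f (DEC i a b gg)).Finite then
        MonoidAlgebra.ofCoeff (Finsupp.ofSupportFinite _ hfin) else 0, ?_⟩
    intro f hf i a b gg
    have hsub : (Function.support fun gg => f (DEC i a b gg)) ⊆
        DEC i a b ⁻¹' Function.support f := fun z hz => hz
    have hfin : (Function.support fun gg => f (DEC i a b gg)).Finite :=
      (Set.Finite.preimage ((hdecinj i a b).injOn) hf).subset hsub
    dsimp only
    rw [dif_pos hfin]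
    exact congrFun Finsupp.ofSupportFinite_coe gg
  -- multiplication in the group algebra, as a `finsum`
  have hmulalg : ∀ i (P Q : MonoidAlgebra R {γ : G // S.d γ = x i ∧ S.r γ = x i}) u,
      (P * Q).coeff u = ∑ᶠ v, P.coeff v * Q.coeff (v⁻¹ * u) := by
    intro i P Q u
    have h1 : ∑ᶠ v, P.coeff v * Q.coeff (v⁻¹ * u) = ∑ v ∈ P.coeff.support, P.coeff v * Q.coeff (v⁻¹ * u) := by
      apply finsum_eq_finset_sum_of_support_subset
      intro v hv
      simp only [Finset.coe_sort_coe, Finsupp.mem_support_iff, Finset.mem_coe]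
      intro h0
      apply hv
      show P.coeff v * Q.coeff (v⁻¹ * u) = 0
      rw [h0, zero_mul]
    rw [h1, MonoidAlgebra.coeff_mul_apply_left, Finsupp.sum]
  -- support of a convolution
  have hmem_conv : ∀ f g : G → R, (Function.support f).Finite →
      (Function.support g).Finite → (Function.support (S.conv f g)).Finite := by
    intro f g hf hg
    apply Set.Finite.subset (((hf.prod hg).image fun p : G × G => S.mul p.1 p.2))
    intro γ hγ
    by_contra hno
    apply hγ
    show S.conv f g γ = 0
    rw [GroupoidStr.conv]
    apply finsum_mem_of_eqOn_zero
    intro p hp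
    rcases eq_or_ne (f p.1) 0 with h0 | h0
    · show f p.1 * g p.2 = 0
      rw [h0, zero_mul]
    rcases eq_or_ne (g p.2) 0 with h1 | h1
    · show f p.1 * g p.2 = 0
      rw [h1, mul_zero]
    exact absurd ⟨p, ⟨h0, h1⟩, hp.2⟩ hno
  refine ⟨φ, ⟨fun f _ => Set.mem_univ _, ?_, ?_⟩, ?_, ?_, ?_⟩
  · -- injectivity
    intro f hf f' hf' hφeq
    funext γ
    have h1 := hφ f ((hstein f).1 hf) (ENC γ).1 (ENC γ).2.1 (ENC γ).2.2.1 (ENC γ).2.2.2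
    have h2 := hφ f' ((hstein f').1 hf') (ENC γ).1 (ENC γ).2.1 (ENC γ).2.2.1 (ENC γ).2.2.2
    rw [hde γ] at h1 h2
    rw [← h1, hφeq, h2]
  · -- surjectivity
    rintro M -
    refine ⟨fun γ => (M (ENC γ).1 (ENC γ).2.1 (ENC γ).2.2.1).coeff (ENC γ).2.2.2, ?_, ?_⟩
    · apply (hstein _).2
      apply Set.Finite.subset
        (Set.finite_iUnion fun i : Fin k => Set.finite_iUnion fun a : Fin (n i) =>
          Set.finite_iUnion fun b : Fin (n i) =>
            ((M i a b).coeff.support.finite_toSet.image (DEC i a b)))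
      intro γ hγ
      simp only [Set.mem_iUnion]
      refine ⟨(ENC γ).1, (ENC γ).2.1, (ENC γ).2.2.1, ?_⟩
      refine ⟨(ENC γ).2.2.2, ?_, hde γ⟩
      simpa using hγ
    · funext i
      refine Matrix.ext fun a b => MonoidAlgebra.ext (Finsupp.ext fun gg => ?_)
      rw [hφ _ ?hfin i a b gg]
      case hfin =>
        apply (hstein _).1
        apply (hstein _).2
        apply Set.Finite.subset
          (Set.finite_iUnion fun i : Fin k => Set.finite_iUnion fun a : Fin (n i) =>
            Set.finite_iUnion fun b : Fin (n i) =>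
              ((M i a b).coeff.support.finite_toSet.image (DEC i a b)))
        intro γ hγ
        simp only [Set.mem_iUnion]
        refine ⟨(ENC γ).1, (ENC γ).2.1, (ENC γ).2.2.1, ?_⟩
        refine ⟨(ENC γ).2.2.2, ?_, hde γ⟩
        simpa using hγ
      rw [hed i a b gg]
  · -- additivity
    intro f hf g hg
    have hsf := (hstein f).1 hf
    have hsg := (hstein g).1 hg
    have hsum : (Function.support (f + g)).Finite :=
      (hsf.union hsg).subset (Function.support_add _ _)
    funext i
    refine Matrix.ext fun a b => MonoidAlgebra.ext (Finsupp.ext fun gg => ?_)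
    rw [hφ _ hsum i a b gg]
    show f (DEC i a b gg) + g (DEC i a b gg) = ((φ f + φ g) i a b).coeff gg
    rw [Pi.add_apply, Matrix.add_apply, MonoidAlgebra.coeff_add, Finsupp.add_apply, hφ f hsf, hφ g hsg]
  · -- multiplicativity
    intro f hf g hg
    have hsf := (hstein f).1 hf
    have hsg := (hstein g).1 hg
    have hconv := hmem_conv f g hsf hsg
    funext i
    refine Matrix.ext fun a b => MonoidAlgebra.ext (Finsupp.ext fun u => ?_)
    rw [hφ _ hconv i a b u]
    have hJinj : Function.Injective
        (fun q : Fin (n i) × {γ : G // S.d γ = x i ∧ S.r γ = x i} =>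
          DEC i a q.1 q.2) := by
      intro q q' hqq
      obtain ⟨-, hc, hg2⟩ := hinj i a q.1 a q'.1 q.2 q'.2 hqq
      exact Prod.ext hc hg2
    have hFsub : (Function.support fun q : Fin (n i) ×
          {γ : G // S.d γ = x i ∧ S.r γ = x i} =>
          f (DEC i a q.1 q.2) * g (DEC i q.1 b (q.2⁻¹ * u))) ⊆
        (fun q : Fin (n i) × {γ : G // S.d γ = x i ∧ S.r γ = x i} =>
          DEC i a q.1 q.2) ⁻¹' Function.support f := by
      intro q hq
      intro h0
      apply hq
      show f (DEC i a q.1 q.2) * g (DEC i q.1 b (q.2⁻¹ * u)) = 0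
      rw [h0, zero_mul]
    have hFfin : (Function.support fun q : Fin (n i) ×
        {γ : G // S.d γ = x i ∧ S.r γ = x i} =>
        f (DEC i a q.1 q.2) * g (DEC i q.1 b (q.2⁻¹ * u))).Finite :=
      (Set.Finite.preimage hJinj.injOn hsf).subset hFsub
    calc S.conv f g (DEC i a b u)
        = ∑ᶠ q ∈ (Set.univ : Set (Fin (n i) ×
            {γ : G // S.d γ = x i ∧ S.r γ = x i})),
            f (DEC i a q.1 q.2) * g (DEC i q.1 b (q.2⁻¹ * u)) := by
          rw [GroupoidStr.conv]
          exact (finsum_mem_eq_of_bijOn _ (hbij i a b u) fun q _ => rfl).symm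
      _ = ∑ᶠ q : Fin (n i) × {γ : G // S.d γ = x i ∧ S.r γ = x i},
            f (DEC i a q.1 q.2) * g (DEC i q.1 b (q.2⁻¹ * u)) := finsum_mem_univ _
      _ = ∑ᶠ (c : Fin (n i)) (v : {γ : G // S.d γ = x i ∧ S.r γ = x i}),
            f (DEC i a c v) * g (DEC i c b (v⁻¹ * u)) := finsum_curry _ hFfin
      _ = ∑ c : Fin (n i), ∑ᶠ v : {γ : G // S.d γ = x i ∧ S.r γ = x i},
            f (DEC i a c v) * g (DEC i c b (v⁻¹ * u)) := finsum_eq_sum_of_fintype _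
      _ = ∑ c : Fin (n i), (φ f i a c * φ g i c b).coeff u := by
          refine Finset.sum_congr rfl fun c _ => ?_
          rw [hmulalg]
          refine finsum_congr fun v => ?_
          rw [hφ f hsf, hφ g hsg]
      _ = ((φ f * φ g) i a b).coeff u := by
          rw [Pi.mul_apply, Matrix.mul_apply, MonoidAlgebra.coeff_sum, Finset.sum_apply']
  · -- scalar multiplication
    intro c f hf
    have hsf := (hstein f).1 hf
    have hsmul : (Function.support (c • f)).Finite := by
      apply hsf.subset
      intro γ hγ
      intro h0
      apply hγ
      show (c • f) γ = 0
      rw [Pi.smul_apply, h0, smul_zero]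
    funext i
    refine Matrix.ext fun a b => MonoidAlgebra.ext (Finsupp.ext fun gg => ?_)
    rw [hφ _ hsmul i a b gg]
    show c • f (DEC i a b gg) = c • (φ f i a b).coeff gg
    rw [hφ f hsf]
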